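/- arXiv:1512.02106 — 4 statements merged into one kernel-verified Lean document; each statement's English description precedes it below -/
import Mathlib

section
/- Let A be an associative algebra over ℂ and let S be a set of elements of A such that for all a, b, c ∈ S one has a·b·c = j·(b·c·a), where j = exp(2πi/3). Then for all a, b, c, d ∈ S the quartic product vanishes: a·b·c·d = 0. -/
/-!
Two applications of the cubic relation rotate a quartic product by two places at the cost of
a factor `ω ^ 2`; rotating twice more gives `abcd = ω ^ 4 • abcd`, and `j ^ 4 = j ≠ 1`.
-/

noncomputable def jRoot : ℂ := Complex.exp (2 * Real.pi * Complex.I / 3)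

lemma isPrimitiveRoot_jRoot : IsPrimitiveRoot jRoot 3 := by
  simpa [jRoot] using Complex.isPrimitiveRoot_exp 3 (by norm_num)

lemma jRoot_pow_four_ne_one : jRoot ^ 4 ≠ 1 := by
  rw [Ne, isPrimitiveRoot_jRoot.pow_eq_one_iff_dvd]
  decide

section TwistedCyclic

variable {R A : Type*}

lemma mul_mul_mul_eq_sq_smul_of_twisted_cyclic [CommSemiring R] [Semiring A] [Algebra R A]
    {S : Set A} {ω : R} (h : ∀ a ∈ S, ∀ b ∈ S, ∀ c ∈ S, a * b * c = ω • (b * c * a))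
    {a b c d : A} (ha : a ∈ S) (hb : b ∈ S) (hc : c ∈ S) (hd : d ∈ S) :
    a * b * c * d = ω ^ 2 • (c * d * a * b) :=
  calc a * b * c * d = a * (b * c * d) := by simp only [mul_assoc]
    _ = ω • (a * c * d * b) := by rw [h b hb c hc d hd, mul_smul_comm]; simp only [mul_assoc]
    _ = ω ^ 2 • (c * d * a * b) := by rw [h a ha c hc d hd, smul_mul_assoc, smul_smul, sq]

lemma mul_mul_mul_eq_zero_of_twisted_cyclic [Field R] [Ring A] [Algebra R A]
    {S : Set A} {ω : R} (hω : ω ^ 4 ≠ 1)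
    (h : ∀ a ∈ S, ∀ b ∈ S, ∀ c ∈ S, a * b * c = ω • (b * c * a))
    {a b c d : A} (ha : a ∈ S) (hb : b ∈ S) (hc : c ∈ S) (hd : d ∈ S) :
    a * b * c * d = 0 := by
  have hfix : a * b * c * d = ω ^ 4 • (a * b * c * d) :=
    calc a * b * c * d = ω ^ 2 • (c * d * a * b) :=
          mul_mul_mul_eq_sq_smul_of_twisted_cyclic h ha hb hc hd
      _ = ω ^ 2 • ω ^ 2 • (a * b * c * d) := by
          rw [mul_mul_mul_eq_sq_smul_of_twisted_cyclic h hc hd ha hb]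
      _ = ω ^ 4 • (a * b * c * d) := by rw [smul_smul, ← pow_add]
  have hzero : (1 - ω ^ 4) • (a * b * c * d) = 0 := by
    rw [sub_smul, one_smul, ← hfix, sub_self]
  exact (smul_eq_zero.mp hzero).resolve_left (sub_ne_zero.mpr hω.symm)

end TwistedCyclic

/-- In an associative ℂ-algebra, if a set `S` of elements satisfies the cubic
relations `a·b·c = j·(b·c·a)` for all `a, b, c ∈ S`, then every quartic product
of elements of `S` vanishes. -/
theorem quartic_products_vanish {A : Type*} [Ring A] [Algebra ℂ A] (S : Set A)
    (h : ∀ a ∈ S, ∀ b ∈ S, ∀ c ∈ S, a * b * c = jRoot • (b * c * a)) :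
    ∀ a ∈ S, ∀ b ∈ S, ∀ c ∈ S, ∀ d ∈ S, a * b * c * d = 0 :=
  fun _ ha _ hb _ hc _ hd =>
    mul_mul_mul_eq_zero_of_twisted_cyclic jRoot_pow_four_ne_one h ha hb hc hd
end

section
/- Let j = exp(2πi/3) and define ρ : Fin 2 → (Fin 2 × Fin 2 × Fin 2) → ℂ by its nonzero components ρ¹₍₁₂₁₎ = 1, ρ¹₍₂₁₁₎ = j², ρ¹₍₁₁₂₎ = j, ρ²₍₂₁₂₎ = 1, ρ²₍₁₂₂₎ = j², ρ²₍₂₂₁₎ = j, all other components being zero. Suppose S, U ∈ M₂(ℂ) satisfy the covariance condition: for all α' and all A, B, C, Σ_β S^{α'}_β · ρ^β_{ABC} = Σ_{A',B',C'} U^{A'}_A · U^{B'}_B · U^{C'}_C · ρ^{α'}_{A'B'C'}. Then S^{1}_1 = U^{1}_1·det U, S^{2}_1 = −U^{2}_1·det U, S^{1}_2 = −U^{1}_2·det U, S^{2}_2 = U^{2}_2·det U. -/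
open BigOperators Matrix

/-- The `j`-skew-invariant trilinear forms `ρ^α_{ABC}` on two generators
(indices 1,2 rendered as `0,1 : Fin 2`), with nonzero components
`ρ¹₍₁₂₁₎ = 1`, `ρ¹₍₂₁₁₎ = j²`, `ρ¹₍₁₁₂₎ = j`,
`ρ²₍₂₁₂₎ = 1`, `ρ²₍₁₂₂₎ = j²`, `ρ²₍₂₂₁₎ = j`. -/
noncomputable def ρform : Fin 2 → Fin 2 → Fin 2 → Fin 2 → ℂ := fun α A B C =>
  if (α, A, B, C) = (0, 0, 1, 0) then 1
  else if (α, A, B, C) = (0, 1, 0, 0) then jRoot ^ 2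
  else if (α, A, B, C) = (0, 0, 0, 1) then jRoot
  else if (α, A, B, C) = (1, 1, 0, 1) then 1
  else if (α, A, B, C) = (1, 0, 1, 1) then jRoot ^ 2
  else if (α, A, B, C) = (1, 1, 1, 0) then jRoot
  else 0

/-- The covariance condition for simultaneous change of basis by `S` (on the
`Z₂`-graded generators) and `U` (on the `Z₃`-graded generators). -/
def RhoCovariant (S U : Matrix (Fin 2) (Fin 2) ℂ) : Prop :=
  ∀ α' A B C, ∑ β, S α' β * ρform β A B C =
    ∑ A', ∑ B', ∑ C', U A' A * U B' B * U C' C * ρform α' A' B' C'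

/-!
On the index patterns `(A, B, C) = (1, 2, 1)` and `(2, 1, 2)` the form `ρ^β` is the Kronecker
delta in `β`, so the left side of the covariance condition reads off one column of `S`. On the
right three terms survive, carrying the factors `1`, `j` and `j²`; two of them are the same
monomial, and `j + j² = -1` turns the sum into `± U^α_β · det U`.
-/

theorem IsPrimitiveRoot.add_sq_eq_neg_one {R : Type*} [CommRing R] [IsDomain R] {ζ : R}
    (hζ : IsPrimitiveRoot ζ 3) : ζ + ζ ^ 2 = -1 := by
  have h := hζ.geom_sum_eq_zero (by norm_num)
  simp only [Finset.sum_range_succ, Finset.sum_range_zero] at h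
  linear_combination h

lemma jRoot_add_sq_eq_neg_one : jRoot + jRoot ^ 2 = -1 :=
  (Complex.isPrimitiveRoot_exp 3 three_ne_zero).add_sq_eq_neg_one

lemma sum_mul_ρform_zero_one_zero (S : Matrix (Fin 2) (Fin 2) ℂ) (α : Fin 2) :
    ∑ β, S α β * ρform β 0 1 0 = S α 0 := by
  simp [ρform]

lemma sum_mul_ρform_one_zero_one (S : Matrix (Fin 2) (Fin 2) ℂ) (α : Fin 2) :
    ∑ β, S α β * ρform β 1 0 1 = S α 1 := by
  simp [ρform]

lemma sum_mul_ρform_zero (U : Matrix (Fin 2) (Fin 2) ℂ) (A B C : Fin 2) :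
    ∑ A', ∑ B', ∑ C', U A' A * U B' B * U C' C * ρform 0 A' B' C' =
      U 0 A * U 1 B * U 0 C + jRoot ^ 2 * U 1 A * U 0 B * U 0 C
        + jRoot * U 0 A * U 0 B * U 1 C := by
  simp only [ρform, Prod.mk.injEq, true_and, zero_ne_one, false_and, ↓reduceIte, mul_ite,
    mul_one, mul_zero, Fin.sum_univ_two, and_true, and_false, one_ne_zero, add_zero, zero_add]
  ring

lemma sum_mul_ρform_one (U : Matrix (Fin 2) (Fin 2) ℂ) (A B C : Fin 2) :
    ∑ A', ∑ B', ∑ C', U A' A * U B' B * U C' C * ρform 1 A' B' C' =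
      U 1 A * U 0 B * U 1 C + jRoot ^ 2 * U 0 A * U 1 B * U 1 C
        + jRoot * U 1 A * U 1 B * U 0 C := by
  simp only [ρform, Prod.mk.injEq, true_and, zero_ne_one, false_and, ↓reduceIte, mul_ite,
    mul_one, mul_zero, Fin.sum_univ_two, and_true, and_false, one_ne_zero, add_zero, zero_add]
  ring

/-- If `S` and `U` satisfy the covariance condition for the `ρ`-forms, then
the entries of `S` are determined by those of `U` and `det U`:
`S¹₁ = U¹₁·det U`, `S²₁ = −U²₁·det U`, `S¹₂ = −U¹₂·det U`, `S²₂ = U²₂·det U`. -/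
theorem covariance_entries (S U : Matrix (Fin 2) (Fin 2) ℂ) (h : RhoCovariant S U) :
    S 0 0 = U 0 0 * U.det ∧ S 1 0 = -(U 1 0 * U.det) ∧
    S 0 1 = -(U 0 1 * U.det) ∧ S 1 1 = U 1 1 * U.det := by
  have h00 := h 0 0 1 0
  have h10 := h 1 0 1 0
  have h01 := h 0 1 0 1
  have h11 := h 1 1 0 1
  simp only [sum_mul_ρform_zero_one_zero, sum_mul_ρform_one_zero_one, sum_mul_ρform_zero,
    sum_mul_ρform_one] at h00 h10 h01 h11
  have hj := jRoot_add_sq_eq_neg_one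
  rw [det_fin_two]
  refine ⟨?_, ?_, ?_, ?_⟩
  · linear_combination h00 + U 0 0 * U 0 1 * U 1 0 * hj
  · linear_combination h10 + U 1 0 * U 0 0 * U 1 1 * hj
  · linear_combination h01 + U 0 1 * U 0 0 * U 1 1 * hj
  · linear_combination h11 + U 0 1 * U 1 0 * U 1 1 * hj
end

section
/- Let j = exp(2πi/3) and define ρ : Fin 2 → (Fin 2 × Fin 2 × Fin 2) → ℂ by its nonzero components ρ¹₍₁₂₁₎ = 1, ρ¹₍₂₁₁₎ = j², ρ¹₍₁₁₂₎ = j, ρ²₍₂₁₂₎ = 1, ρ²₍₁₂₂₎ = j², ρ²₍₂₂₁₎ = j, all other components being zero. If S, U ∈ M₂(ℂ) satisfy the covariance condition: for all α' and all A, B, C, Σ_β S^{α'}_β · ρ^β_{ABC} = Σ_{A',B',C'} U^{A'}_A · U^{B'}_B · U^{C'}_C · ρ^{α'}_{A'B'C'}, then det S = (det U)³. -/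
/-!
At the index triples `(1,2,1)` and `(2,1,2)` the vector `ρ^β_{ABC}` is a standard basis vector, so
covariance there says that the columns of `S` are `ρ(u,v,u)` and `ρ(v,u,v)`, where `u, v` are the
columns of `U` and `ρ(x,y,z)^α = ∑ x_A y_B z_C ρ^α_{ABC}`. Because `j² + j = -1`, one has
`ρ(x,y,x) = det(x,y) • (x₁, -x₂)`. Hence `S = det U • D U D` with `D = diag(1,-1)`, and
`det S = (det U)² · det U`.
-/

open BigOperators Matrix

theorem jRoot_sq_add_jRoot_add_one : jRoot ^ 2 + jRoot + 1 = 0 := by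
  have hprim : IsPrimitiveRoot jRoot 3 := by
    simpa [jRoot] using Complex.isPrimitiveRoot_exp 3 (by norm_num)
  have hsum := hprim.geom_sum_eq_zero (by norm_num)
  simp only [Finset.sum_range_succ, Finset.sum_range_zero] at hsum
  linear_combination hsum

noncomputable def ρeval (x y z : Fin 2 → ℂ) : Fin 2 → ℂ := fun α =>
  ∑ A, ∑ B, ∑ C, x A * y B * z C * ρform α A B C

theorem ρeval_self_left_right (x y : Fin 2 → ℂ) :
    ρeval x y x = (x 0 * y 1 - x 1 * y 0) • ![x 0, -x 1] := by
  ext α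
  fin_cases α <;> simp [ρeval, ρform, Fin.sum_univ_two]
  · linear_combination x 0 * x 1 * y 0 * jRoot_sq_add_jRoot_add_one
  · linear_combination x 0 * x 1 * y 1 * jRoot_sq_add_jRoot_add_one

theorem RhoCovariant.col_eq_ρeval {S U : Matrix (Fin 2) (Fin 2) ℂ} (h : RhoCovariant S U) :
    (fun α => S α 0) = ρeval (fun A => U A 0) (fun A => U A 1) (fun A => U A 0) ∧
      (fun α => S α 1) = ρeval (fun A => U A 1) (fun A => U A 0) (fun A => U A 1) := by
  constructor <;> funext α
  · rw [ρeval, ← h α 0 1 0]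
    simp [ρform]
  · rw [ρeval, ← h α 1 0 1]
    simp [ρform]

theorem RhoCovariant.eq_det_smul {S U : Matrix (Fin 2) (Fin 2) ℂ} (h : RhoCovariant S U) :
    S = U.det • !![U 0 0, -U 0 1; -U 1 0, U 1 1] := by
  obtain ⟨h0, h1⟩ := h.col_eq_ρeval
  simp only [ρeval_self_left_right, funext_iff, Fin.forall_fin_two, Pi.smul_apply, smul_eq_mul,
    cons_val_zero, cons_val_one] at h0 h1
  obtain ⟨h00, h10⟩ := h0
  obtain ⟨h01, h11⟩ := h1
  rw [eta_fin_two S, h00, h01, h10, h11, det_fin_two]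
  simp only [smul_of, smul_cons, smul_empty, smul_eq_mul]
  congr 1
  exact vec2_eq (vec2_eq (by ring) (by ring)) (vec2_eq (by ring) (by ring))

/-- If `S` and `U` satisfy the covariance condition for the `ρ`-forms, then
`det S = (det U)³`. -/
theorem covariance_det (S U : Matrix (Fin 2) (Fin 2) ℂ) (h : RhoCovariant S U) :
    S.det = U.det ^ 3 := by
  rw [h.eq_det_smul, det_smul, det_fin_two_of, det_fin_two U]
  simp only [Fintype.card_fin]
  ring
end

section
/- Let σ⁰ = [[1,0],[0,1]], σ¹ = [[0,1],[1,0]], σ² = [[0,−i],[i,0]], σ³ = [[1,0],[0,−1]] be the identity and the three Pauli matrices in M₂(ℂ). Suppose U ∈ M₂(ℂ) and Λ is a 4×4 complex matrix (indices μ, ν ∈ {0,1,2,3}) satisfying, for all μ and all A, B ∈ {1,2}: Σ_ν Λ^{μ}_ν · σ^ν_{AB} = Σ_{A',B'} U^{A'}_A · conj(U^{B'}_B) · σ^{μ}_{A'B'}. Then det Λ = (det U)² · (conj(det U))². -/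
open BigOperators Matrix

/-- The identity matrix and the three Pauli matrices
(indices `0,1,2,3 : Fin 4`). -/
noncomputable def pauli : Fin 4 → Matrix (Fin 2) (Fin 2) ℂ
  | 0 => !![1, 0; 0, 1]
  | 1 => !![0, 1; 1, 0]
  | 2 => !![0, -Complex.I; Complex.I, 0]
  | 3 => !![1, 0; 0, -1]

/-!
Let `P` be the 4×4 matrix whose `μ`-th row is `σ^μ` flattened. The hypothesis says exactly
`Λ P = P (U ⊗ Ū)`, and `P Pᴴ = 2` (the Pauli matrices are trace-orthogonal), so `P` is invertible
and `Λ` is similar to the Kronecker product `U ⊗ Ū`, whose determinant is `(det U)² (det Ū)²`.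
-/

open Kronecker

theorem Matrix.det_eq_det_of_mul_eq_mul_of_mul_eq_one {m n R : Type*} [Fintype m] [DecidableEq m]
    [Fintype n] [DecidableEq n] [CommRing R] (hcard : Fintype.card m = Fintype.card n)
    {A : Matrix m m R} {B : Matrix n n R} {S : Matrix m n R} {T : Matrix n m R}
    (hST : S * T = 1) (h : A * S = S * B) : A.det = B.det := by
  obtain e : m ≃ n := Fintype.equivOfCardEq hcard
  set S' := S.submatrix id e
  have hS' : IsUnit S'.det := isUnit_det_of_right_inverse (B := T.submatrix e id) <| by
    rw [submatrix_mul_equiv, hST, submatrix_id_id]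
  have hconj : A * S' = S' * B.submatrix e e := by
    rw [submatrix_mul_equiv, ← h]
    rfl
  rw [← det_submatrix_equiv_self e B]
  exact hS'.mul_left_cancel (by rw [← det_mul, ← det_mul, ← hconj, det_mul_comm])

noncomputable def pauliCoords : Matrix (Fin 4) (Fin 2 × Fin 2) ℂ :=
  of fun μ p => pauli μ p.1 p.2

theorem pauliCoords_mul_conjTranspose : pauliCoords * pauliCoordsᴴ = 2 := by
  ext μ ν
  fin_cases μ <;> fin_cases ν <;>
    norm_num [pauliCoords, pauli, mul_apply, Fintype.sum_prod_type, ofNat_apply]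

theorem mul_pauliCoords_eq_pauliCoords_mul_kronecker {U : Matrix (Fin 2) (Fin 2) ℂ}
    {Λ : Matrix (Fin 4) (Fin 4) ℂ}
    (h : ∀ μ A B, ∑ ν, Λ μ ν * pauli ν A B =
      ∑ A', ∑ B', U A' A * (starRingEnd ℂ) (U B' B) * pauli μ A' B') :
    Λ * pauliCoords = pauliCoords * (U ⊗ₖ U.map (starRingEnd ℂ)) := by
  ext μ ⟨A, B⟩
  simp only [mul_apply, pauliCoords, of_apply, h, Fintype.sum_prod_type, kroneckerMap_apply,
    map_apply]
  exact Finset.sum_congr rfl fun _ _ => Finset.sum_congr rfl fun _ _ => mul_comm _ _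

/-- If the 4×4 matrix `Λ` represents on the four matrices `σ^μ` the
transformation of the lower spinor indices by `U` and its complex conjugate,
i.e. `Σ_ν Λ^μ_ν σ^ν_{AB} = Σ_{A',B'} U^{A'}_A · conj(U^{B'}_B) · σ^μ_{A'B'}`,
then `det Λ = (det U)²·(conj(det U))²`. -/
theorem lorentz_det (U : Matrix (Fin 2) (Fin 2) ℂ)
    (Λ : Matrix (Fin 4) (Fin 4) ℂ)
    (h : ∀ μ A B, ∑ ν, Λ μ ν * pauli ν A B =
      ∑ A', ∑ B', U A' A * (starRingEnd ℂ) (U B' B) * pauli μ A' B') :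
    Λ.det = U.det ^ 2 * ((starRingEnd ℂ) U.det) ^ 2 := by
  have hinv : pauliCoords * ((2⁻¹ : ℂ) • pauliCoordsᴴ) = 1 := by
    rw [Matrix.mul_smul, pauliCoords_mul_conjTranspose]
    ext i j
    simp [ofNat_apply, one_apply]
  rw [det_eq_det_of_mul_eq_mul_of_mul_eq_one (by simp) hinv
      (mul_pauliCoords_eq_pauliCoords_mul_kronecker h),
    det_kronecker, RingHom.map_det, RingHom.mapMatrix_apply, Fintype.card_fin]
end
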